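/- Let X be a Banach space, let D₁ ⊂ X and D₂ ⊂ ℝ^{d₂} be compact sets, let A be a compact subset of C(D₁), and let G : A → C(D₂) be a continuous (possibly nonlinear) operator. Then for every ε > 0 there exist a positive integer p, a continuous map G₁ : A → ℝᵖ, and a continuous function f : D₂ → ℝᵖ such that |G(a)(y) − ⟨G₁(a), f(y)⟩| < ε for all a ∈ A and all y ∈ D₂, where ⟨·,·⟩ denotes the dot product in ℝᵖ. -/

import Mathlib

/-!
The compact set `G(A) ⊆ C(D₂)` is covered by finitely many `ε`-balls with centres `c₁, …, cₚ`.
Normalising the tent functions `max 0 (ε - ‖g - cₖ‖)` gives a partition of unity on `G(A)`,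
and the resulting Schauder projection `g ↦ ∑ₖ wₖ(g) cₖ` moves every point of `G(A)` by less
than `ε`, since it is a convex combination of centres lying in the open `ε`-ball around it.
Take `G₁ = w ∘ G` and `f(y) = (cₖ(y))ₖ`.
-/

open Metric Set

section TentWeights

variable {α ι : Type*} [PseudoMetricSpace α] [Fintype ι]

lemma IsCompact.exists_fin_cover_balls [Nonempty α] {K : Set α} (hK : IsCompact K) {ε : ℝ}
    (hε : 0 < ε) : ∃ p, 0 < p ∧ ∃ c : Fin p → α, K ⊆ ⋃ k, ball (c k) ε := by
  obtain ⟨t, -, ht, hKt⟩ := hK.finite_cover_balls hε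
  obtain ⟨p, c, hc⟩ := (ht.insert (Classical.arbitrary α)).fin_embedding
  have hsub : insert (Classical.arbitrary α) t ⊆ range c := hc.ge
  refine ⟨p, ?_, c, hKt.trans (iUnion₂_subset fun x hx => ?_)⟩
  · obtain ⟨k, -⟩ := hsub (mem_insert _ _)
    exact k.pos
  · obtain ⟨k, rfl⟩ := hsub (mem_insert_of_mem _ hx)
    exact subset_iUnion (fun k => ball (c k) ε) k

/-- Off `⋃ i, ball (c i) ε` the denominator vanishes, so all weights are `0` there. -/
noncomputable def tentWeights (c : ι → α) (ε : ℝ) (x : α) (i : ι) : ℝ :=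
  max 0 (ε - dist x (c i)) / ∑ j, max 0 (ε - dist x (c j))

variable (c : ι → α) (ε : ℝ) {x : α}

lemma tentWeights_nonneg (i : ι) : 0 ≤ tentWeights c ε x i := by
  unfold tentWeights
  positivity

lemma dist_lt_of_tentWeights_ne_zero {i : ι} (h : tentWeights c ε x i ≠ 0) :
    dist x (c i) < ε := by
  by_contra! hle
  exact h (by simp [tentWeights, max_eq_left (sub_nonpos.mpr hle)])

lemma sum_tent_pos_of_mem_iUnion (hx : x ∈ ⋃ i, ball (c i) ε) : 0 < ∑ j, max 0 (ε - dist x (c j)) := by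
  obtain ⟨i, hi⟩ := mem_iUnion.mp hx
  exact Finset.sum_pos' (fun _ _ => le_max_left _ _)
    ⟨i, Finset.mem_univ _, lt_max_of_lt_right (sub_pos.mpr hi)⟩

lemma sum_tentWeights (hx : x ∈ ⋃ i, ball (c i) ε) : ∑ i, tentWeights c ε x i = 1 := by
  simp only [tentWeights, ← Finset.sum_div]
  exact div_self (sum_tent_pos_of_mem_iUnion c ε hx).ne'

lemma continuousOn_tentWeights : ContinuousOn (tentWeights c ε) (⋃ i, ball (c i) ε) :=
  continuousOn_pi.2 fun _ => ContinuousOn.div (by fun_prop) (by fun_prop)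
    fun _ hx => (sum_tent_pos_of_mem_iUnion c ε hx).ne'

end TentWeights

lemma dist_sum_smul_lt_of_weights {ι E : Type*} [Fintype ι] [SeminormedAddCommGroup E]
    [NormedSpace ℝ E] {w : ι → ℝ} {z : ι → E} {x : E} {r : ℝ} (h₀ : ∀ i, 0 ≤ w i)
    (h₁ : ∑ i, w i = 1) (hz : ∀ i, w i ≠ 0 → dist (z i) x < r) :
    dist (∑ i, w i • z i) x < r := by
  have h := (convex_ball x r).finsum_mem h₀ (by rwa [finsum_eq_sum_of_fintype]) hz
  rwa [finsum_eq_sum_of_fintype, mem_ball] at h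

theorem IsCompact.exists_finite_rank_approx {E : Type*} [SeminormedAddCommGroup E]
    [NormedSpace ℝ E] {K : Set E} (hK : IsCompact K) {ε : ℝ} (hε : 0 < ε) :
    ∃ p, 0 < p ∧ ∃ (w : E → Fin p → ℝ) (c : Fin p → E),
      ContinuousOn w K ∧ ∀ x ∈ K, dist (∑ k, w x k • c k) x < ε := by
  obtain ⟨p, hp, c, hcover⟩ := hK.exists_fin_cover_balls hε
  refine ⟨p, hp, tentWeights c ε, c, (continuousOn_tentWeights c ε).mono hcover, fun x hx => ?_⟩
  refine dist_sum_smul_lt_of_weights (tentWeights_nonneg c ε) (sum_tentWeights c ε (hcover hx))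
    fun i hi => ?_
  rw [dist_comm]
  exact dist_lt_of_tentWeights_ne_zero c ε hi

theorem rdo_branch_universal_approximation_general
    {X : Type*} [NormedAddCommGroup X]
    {d₂ : ℕ} (D₁ : Set X) (D₂ : Set (EuclideanSpace ℝ (Fin d₂)))
    (hD₂ : IsCompact D₂)
    (A : Set C(D₁, ℝ)) (hA : IsCompact A)
    (G : A → C(D₂, ℝ)) (hG : Continuous G)
    (ε : ℝ) (hε : 0 < ε) :
    ∃ (p : ℕ), 0 < p ∧
      ∃ (G₁ : A → (Fin p → ℝ)) (f : D₂ → (Fin p → ℝ)),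
        Continuous G₁ ∧ Continuous f ∧
        ∀ (a : A) (y : D₂), |G a y - ∑ k, G₁ a k * f y k| < ε := by
  have : CompactSpace D₂ := isCompact_iff_compactSpace.mp hD₂
  have : CompactSpace A := isCompact_iff_compactSpace.mp hA
  obtain ⟨p, hp, w, c, hw, hwc⟩ := (isCompact_range hG).exists_finite_rank_approx hε
  refine ⟨p, hp, w ∘ G, fun y k => c k y, hw.comp_continuous hG mem_range_self,
    continuous_pi fun k => (c k).continuous, fun a y => ?_⟩
  calc |G a y - ∑ k, w (G a) k * c k y|
      = dist ((∑ k, w (G a) k • c k) y) (G a y) := by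
        simp [Real.dist_eq, abs_sub_comm]
    _ ≤ dist (∑ k, w (G a) k • c k) (G a) := ContinuousMap.dist_apply_le_dist y
    _ < ε := hwc _ (mem_range_self a)

/-- Theorem 1 of the paper.  Let `X` be a Banach space, `D₁ ⊂ X` and `D₂ ⊂ ℝ^{d₂}` compact
sets, `A` a compact subset of `C(D₁)`, and `G : A → C(D₂)` a continuous operator.  Then for
every `ε > 0` there exist a positive integer `p`, a continuous map `G₁ : A → ℝᵖ`, and a
continuous function `f : D₂ → ℝᵖ` such that
`|G(a)(y) − ⟨G₁(a), f(y)⟩| < ε` for all `a ∈ A`, `y ∈ D₂`. -/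
theorem rdo_branch_universal_approximation
    {X : Type*} [NormedAddCommGroup X] [NormedSpace ℝ X] [CompleteSpace X]
    {d₂ : ℕ} (D₁ : Set X) (D₂ : Set (EuclideanSpace ℝ (Fin d₂)))
    (hD₁ : IsCompact D₁) (hD₂ : IsCompact D₂)
    (A : Set C(D₁, ℝ)) (hA : IsCompact A)
    (G : A → C(D₂, ℝ)) (hG : Continuous G)
    (ε : ℝ) (hε : 0 < ε) :
    ∃ (p : ℕ), 0 < p ∧
      ∃ (G₁ : A → (Fin p → ℝ)) (f : D₂ → (Fin p → ℝ)),
        Continuous G₁ ∧ Continuous f ∧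
        ∀ (a : A) (y : D₂), |G a y - ∑ k, G₁ a k * f y k| < ε :=
  rdo_branch_universal_approximation_general D₁ D₂ hD₂ A hA G hG ε hε
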